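/- arXiv:1703.07845 — 4 statements merged into one kernel-verified Lean document; each statement's English description precedes it below -/
import Mathlib

section
/- Let a, k, γ, T₀ > 0 and let β, δ be real constants with β + δ + 1 ≥ 0 and α = β − δ ≥ 0. Then the equation (k T₀)/(γ a^{β+δ+2} 2^{β+1}) · f(z) = z^{β+δ+1}, z > 0, where f(z) = 1/(z M(α/2+1, 3/2, z²)), has exactly one positive solution z = ξ. -/
/-- Kummer confluent hypergeometric function `M(a,b,z) = ∑ (a)ₛ/((b)ₛ s!) zˢ`. -/
noncomputable def kummerM (a b z : ℝ) : ℝ :=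
  ∑' n : ℕ, ((ascPochhammer ℝ n).eval a / ((ascPochhammer ℝ n).eval b * n.factorial)) * z ^ n

/-- Error function `erf z = (2/√π) ∫₀ᶻ e^{-u²} du`. -/
noncomputable def erf (z : ℝ) : ℝ := (2 / Real.sqrt Real.pi) * ∫ u in (0:ℝ)..z, Real.exp (-u^2)

/-- Complementary error function. -/
noncomputable def erfc (z : ℝ) : ℝ := 1 - erf z

/-- Repeated integrals of the complementary error function:
`i⁰erfc = erfc`, `iⁿ⁺¹erfc z = ∫_z^∞ iⁿerfc t dt`. -/
noncomputable def inerfc : ℕ → ℝ → ℝ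
  | 0 => erfc
  | (n+1) => fun z => ∫ t in Set.Ici z, inerfc n t

/-- Series coefficients of the Kummer function with `b = 3/2`. -/
noncomputable def kc (a' : ℝ) (n : ℕ) : ℝ :=
  (ascPochhammer ℝ n).eval a' / ((ascPochhammer ℝ n).eval (3/2 : ℝ) * n.factorial)

lemma kc_pos {a' : ℝ} (ha' : 0 < a') (n : ℕ) : 0 < kc a' n :=
  div_pos (ascPochhammer_pos _ _ ha')
    (mul_pos (ascPochhammer_pos _ _ (by norm_num)) (by exact_mod_cast n.factorial_pos))

lemma kc_succ (a' : ℝ) (n : ℕ) :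
    kc a' (n + 1) = kc a' n * ((a' + n) / ((3/2 + n) * (n + 1))) := by
  have h1 : ((ascPochhammer ℝ n).eval (3/2 : ℝ)) ≠ 0 :=
    (ascPochhammer_pos _ _ (by norm_num : (0:ℝ) < 3/2)).ne'
  have h2 : ((n.factorial : ℝ)) ≠ 0 := by exact_mod_cast n.factorial_pos.ne'
  have h3 : ((3:ℝ)/2 + n) ≠ 0 := by positivity
  have h4 : ((n:ℝ) + 1) ≠ 0 := by positivity
  unfold kc
  rw [ascPochhammer_succ_eval, ascPochhammer_succ_eval, Nat.factorial_succ]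
  push_cast
  field_simp

lemma kc_summable {a' : ℝ} (ha' : 0 < a') (x : ℝ) :
    Summable (fun n : ℕ => kc a' n * x ^ n) := by
  rcases eq_or_ne x 0 with rfl | hx
  · apply summable_of_ne_finset_zero (s := {0})
    intro n hn
    simp only [Finset.mem_singleton] at hn
    simp [zero_pow hn]
  · apply summable_of_ratio_norm_eventually_le (r := 1/2) (by norm_num)
    filter_upwards [Filter.eventually_ge_atTop ⌈max a' (4 * |x|)⌉₊] with n hn
    have hn' : max a' (4 * |x|) ≤ (n : ℝ) := le_trans (Nat.le_ceil _) (by exact_mod_cast hn)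
    have ha'n : a' ≤ (n : ℝ) := le_trans (le_max_left _ _) hn'
    have hxn : 4 * |x| ≤ (n : ℝ) := le_trans (le_max_right _ _) hn'
    have key : kc a' (n + 1) * x ^ (n + 1) =
        (kc a' n * x ^ n) * ((a' + n) / ((3/2 + n) * (n + 1)) * x) := by
      rw [kc_succ a', pow_succ]; ring
    rw [key, norm_mul]
    have hden : (0:ℝ) < (3/2 + n) * (n + 1) := by positivity
    have hq : ‖(a' + n) / ((3/2 + n) * (n + 1)) * x‖ ≤ 1/2 := by
      rw [Real.norm_eq_abs, abs_mul, abs_div, abs_of_pos (by positivity : (0:ℝ) < a' + n),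
        abs_of_pos hden, div_mul_eq_mul_div, div_le_iff₀ hden]
      nlinarith [abs_nonneg x, mul_le_mul_of_nonneg_right ha'n (abs_nonneg x),
        mul_le_mul_of_nonneg_left hxn (Nat.cast_nonneg n : (0:ℝ) ≤ n)]
    calc ‖kc a' n * x ^ n‖ * ‖(a' + n) / ((3/2 + n) * (n + 1)) * x‖
        ≤ ‖kc a' n * x ^ n‖ * (1/2) :=
          mul_le_mul_of_nonneg_left hq (norm_nonneg _)
      _ = 1/2 * ‖kc a' n * x ^ n‖ := mul_comm _ _

lemma kummerM_eq (a' x : ℝ) : kummerM a' (3/2) x = ∑' n : ℕ, kc a' n * x ^ n := rfl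

lemma one_le_kummerM {a' : ℝ} (ha' : 0 < a') {x : ℝ} (hx : 0 ≤ x) :
    1 ≤ kummerM a' (3/2) x := by
  rw [kummerM_eq]
  have h0 : kc a' 0 * x ^ 0 = 1 := by simp [kc]
  calc (1:ℝ) = kc a' 0 * x ^ 0 := h0.symm
    _ ≤ ∑' n : ℕ, kc a' n * x ^ n :=
        Summable.le_tsum (kc_summable ha' x) 0
          (fun j _ => mul_nonneg (kc_pos ha' j).le (pow_nonneg hx j))

lemma kummerM_pos {a' : ℝ} (ha' : 0 < a') {x : ℝ} (hx : 0 ≤ x) :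
    0 < kummerM a' (3/2) x := lt_of_lt_of_le one_pos (one_le_kummerM ha' hx)

lemma kummerM_mono {a' : ℝ} (ha' : 0 < a') {x y : ℝ} (hx : 0 ≤ x) (hxy : x ≤ y) :
    kummerM a' (3/2) x ≤ kummerM a' (3/2) y := by
  rw [kummerM_eq, kummerM_eq]
  exact Summable.tsum_le_tsum
    (fun n => mul_le_mul_of_nonneg_left (pow_le_pow_left₀ hx hxy n) (kc_pos ha' n).le)
    (kc_summable ha' x) (kc_summable ha' y)

lemma kummerM_sq_continuousOn {a' : ℝ} (ha' : 0 < a') (R : ℝ) :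
    ContinuousOn (fun z : ℝ => kummerM a' (3/2) (z ^ 2)) (Set.Icc (-R) R) := by
  have : ContinuousOn (fun z : ℝ => ∑' n : ℕ, kc a' n * (z ^ 2) ^ n) (Set.Icc (-R) R) := by
    apply continuousOn_tsum (u := fun n => kc a' n * (R ^ 2) ^ n)
    · intro n; fun_prop
    · exact kc_summable ha' (R ^ 2)
    · intro n z hz
      have hz2 : z ^ 2 ≤ R ^ 2 := sq_le_sq' hz.1 hz.2
      rw [Real.norm_eq_abs, abs_mul, abs_of_pos (kc_pos ha' n), abs_pow]
      gcongr
      · exact (kc_pos ha' n).le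
      · rw [abs_of_nonneg (sq_nonneg z)]; exact hz2
  exact this

/-- The transcendental equation for the free-boundary coefficient ξ has exactly one
positive solution, provided `β + δ + 1 ≥ 0` and `α = β - δ ≥ 0`. -/
theorem xi_equation_unique_solution
    (a k γ T₀ β δ α : ℝ)
    (ha : 0 < a) (hk : 0 < k) (hγ : 0 < γ) (hT₀ : 0 < T₀)
    (hβδ : β + δ + 1 ≥ 0) (hα : α = β - δ) (hα0 : 0 ≤ α) :
    ∃! z : ℝ, 0 < z ∧
      (k * T₀) / (γ * a ^ (β + δ + 2) * 2 ^ (β + 1)) *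
        (1 / (z * kummerM (α / 2 + 1) (3 / 2) (z ^ 2))) = z ^ (β + δ + 1) := by
  have hA : (0:ℝ) < α / 2 + 1 := by linarith
  set C : ℝ := (k * T₀) / (γ * a ^ (β + δ + 2) * 2 ^ (β + 1)) with hCdef
  have hCpos : 0 < C := by
    have h1 : (0:ℝ) < a ^ (β + δ + 2) := Real.rpow_pos_of_pos ha _
    have h2 : (0:ℝ) < (2:ℝ) ^ (β + 1) := Real.rpow_pos_of_pos (by norm_num) _
    positivity
  set p : ℝ := β + δ + 1 with hpdef
  have hp : 0 ≤ p := hβδ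
  set F : ℝ → ℝ := fun z => z ^ p * (z * kummerM (α / 2 + 1) (3/2) (z ^ 2)) with hFdef
  -- the equation is equivalent to `F z = C`
  have key : ∀ z : ℝ, 0 < z →
      ((C * (1 / (z * kummerM (α / 2 + 1) (3/2) (z ^ 2))) = z ^ p) ↔ F z = C) := by
    intro z hz
    have hM : 0 < kummerM (α / 2 + 1) (3/2) (z ^ 2) := kummerM_pos hA (sq_nonneg z)
    have hzM : 0 < z * kummerM (α / 2 + 1) (3/2) (z ^ 2) := mul_pos hz hM
    rw [mul_one_div, div_eq_iff hzM.ne']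
    constructor
    · intro H; simp only [hFdef]; linarith
    · intro H; simp only [hFdef] at H; linarith
  -- strict monotonicity of F on (0, ∞)
  have hmono : StrictMonoOn F (Set.Ioi 0) := by
    intro z1 h1 z2 h2 hlt
    simp only [Set.mem_Ioi] at h1 h2
    have hM1 : 0 < kummerM (α / 2 + 1) (3/2) (z1 ^ 2) := kummerM_pos hA (sq_nonneg z1)
    have hMle : kummerM (α / 2 + 1) (3/2) (z1 ^ 2) ≤ kummerM (α / 2 + 1) (3/2) (z2 ^ 2) :=
      kummerM_mono hA (sq_nonneg z1) (by nlinarith)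
    have hrle : z1 ^ p ≤ z2 ^ p := Real.rpow_le_rpow h1.le hlt.le hp
    have hrpos1 : 0 < z1 ^ p := Real.rpow_pos_of_pos h1 p
    have hrpos2 : 0 < z2 ^ p := Real.rpow_pos_of_pos h2 p
    have hin : z1 * kummerM (α / 2 + 1) (3/2) (z1 ^ 2) <
        z2 * kummerM (α / 2 + 1) (3/2) (z2 ^ 2) := by nlinarith
    have hin0 : 0 < z1 * kummerM (α / 2 + 1) (3/2) (z1 ^ 2) := mul_pos h1 hM1
    simp only [hFdef]
    nlinarith
  -- continuity of F on compact subintervals of (0, ∞)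
  have hcont : ∀ u v : ℝ, 0 < u → ContinuousOn F (Set.Icc u v) := by
    intro u v hu
    have hsub : Set.Icc u v ⊆ Set.Icc (-v) v := by
      intro x hx
      exact ⟨le_trans (by linarith [hx.1, hx.2] : -v ≤ u) hx.1, hx.2⟩
    apply ContinuousOn.mul
    · intro x hx
      exact (Real.continuousAt_rpow_const x p
        (Or.inl (ne_of_gt (lt_of_lt_of_le hu hx.1)))).continuousWithinAt
    · exact continuousOn_id.mul ((kummerM_sq_continuousOn hA v).mono hsub)
  -- endpoints for IVT
  have hM1pos : 0 < kummerM (α / 2 + 1) (3/2) 1 := kummerM_pos hA zero_le_one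
  set z₂ : ℝ := max 1 C with hz2def
  set z₁ : ℝ := min 1 (C / kummerM (α / 2 + 1) (3/2) 1) with hz1def
  have hz1pos : 0 < z₁ := lt_min one_pos (div_pos hCpos hM1pos)
  have hz1le1 : z₁ ≤ 1 := min_le_left _ _
  have hz2ge1 : (1:ℝ) ≤ z₂ := le_max_left _ _
  have hz12 : z₁ ≤ z₂ := hz1le1.trans hz2ge1
  have hFz1 : F z₁ ≤ C := by
    have e0 : z₁ ^ p ≤ 1 := Real.rpow_le_one hz1pos.le hz1le1 hp
    have e1 : kummerM (α / 2 + 1) (3/2) (z₁ ^ 2) ≤ kummerM (α / 2 + 1) (3/2) 1 :=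
      kummerM_mono hA (sq_nonneg z₁) (by nlinarith)
    have e2 : z₁ * kummerM (α / 2 + 1) (3/2) (z₁ ^ 2) ≤ C := by
      calc z₁ * kummerM (α / 2 + 1) (3/2) (z₁ ^ 2)
          ≤ z₁ * kummerM (α / 2 + 1) (3/2) 1 :=
            mul_le_mul_of_nonneg_left e1 hz1pos.le
        _ ≤ (C / kummerM (α / 2 + 1) (3/2) 1) * kummerM (α / 2 + 1) (3/2) 1 :=
            mul_le_mul_of_nonneg_right (min_le_right _ _) hM1pos.le
        _ = C := div_mul_cancel₀ _ hM1pos.ne'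
    have e3 : 0 ≤ z₁ * kummerM (α / 2 + 1) (3/2) (z₁ ^ 2) :=
      mul_nonneg hz1pos.le (kummerM_pos hA (sq_nonneg z₁)).le
    calc F z₁ = z₁ ^ p * (z₁ * kummerM (α / 2 + 1) (3/2) (z₁ ^ 2)) := rfl
      _ ≤ 1 * C := mul_le_mul e0 e2 e3 zero_le_one
      _ = C := one_mul C
  have hFz2 : C ≤ F z₂ := by
    have e0 : (1:ℝ) ≤ z₂ ^ p := by
      have := Real.rpow_le_rpow_of_exponent_le hz2ge1 hp
      rwa [Real.rpow_zero] at this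
    have e1 : (1:ℝ) ≤ kummerM (α / 2 + 1) (3/2) (z₂ ^ 2) :=
      one_le_kummerM hA (sq_nonneg z₂)
    have hz2pos : (0:ℝ) < z₂ := lt_of_lt_of_le one_pos hz2ge1
    have : C ≤ z₂ := le_max_right _ _
    calc C ≤ z₂ := this
      _ = 1 * (z₂ * 1) := by ring
      _ ≤ z₂ ^ p * (z₂ * kummerM (α / 2 + 1) (3/2) (z₂ ^ 2)) := by
          apply mul_le_mul e0 _ (by nlinarith) (by positivity)
          exact mul_le_mul_of_nonneg_left e1 hz2pos.le
      _ = F z₂ := rfl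
  -- IVT
  obtain ⟨ξ, hξmem, hξeq⟩ :=
    intermediate_value_Icc hz12 (hcont z₁ z₂ hz1pos) ⟨hFz1, hFz2⟩
  have hξpos : 0 < ξ := lt_of_lt_of_le hz1pos hξmem.1
  refine ⟨ξ, ⟨hξpos, (key ξ hξpos).mpr hξeq⟩, ?_⟩
  rintro z ⟨hzpos, hzeq⟩
  have h1 : F z = C := (key z hzpos).mp hzeq
  exact hmono.injOn (Set.mem_Ioi.mpr hzpos) (Set.mem_Ioi.mpr hξpos) (h1.trans hξeq.symm)
end

section
/- Let α ≥ 0 be a real number. For any real constants c₁, c₂, the function φ(η) = c₁ M(−α/2, 1/2, −η²) + c₂ η M(−α/2 + 1/2, 3/2, −η²) is twice differentiable on ℝ and satisfies the ordinary differential equation φ''(η) + 2η φ'(η) − 2α φ(η) = 0 for all η ∈ ℝ. -/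
/-!
The function is the power series `∑ aₖ ηᵏ` with `a₀ = c₁`, `a₁ = c₂` and
`(k + 1)(k + 2) aₖ₊₂ = 2(α - k) aₖ`: the even coefficients are those of `c₁ M(-α/2, 1/2, -η²)` and
the odd ones those of `c₂ η M(-α/2 + 1/2, 3/2, -η²)`, because the ratio of consecutive Kummer
coefficients is `(a + n)/((b + n)(n + 1))`. The recurrence says exactly that the `k`-th coefficient
of `φ'' + 2ηφ' - 2αφ` vanishes once the series is differentiated termwise. Termwise
differentiation is legitimate since `|aₖ₊₂| ≤ C |aₖ| / (k + 1)`, so the series and its derived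
series converge absolutely on all of `ℝ`.
-/

open Filter Topology

noncomputable def kummerCoeff (a b : ℝ) (n : ℕ) : ℝ :=
  (ascPochhammer ℝ n).eval a / ((ascPochhammer ℝ n).eval b * n.factorial)

lemma kummerCoeff_zero (a b : ℝ) : kummerCoeff a b 0 = 1 := by
  simp [kummerCoeff]

/-- No condition on `b` is needed: if `(b)ₙ (b + n) = 0`, both sides are `0` as `x / 0 = 0`. -/
lemma kummerCoeff_succ (a b : ℝ) (n : ℕ) :
    kummerCoeff a b (n + 1) = kummerCoeff a b n * ((a + n) / ((b + n) * (n + 1))) := by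
  simp only [kummerCoeff, ascPochhammer_succ_eval, Nat.factorial_succ, Nat.cast_mul,
    Nat.cast_succ, div_mul_div_comm]
  ring_nf

lemma kummerM_eq_tsum (a b z : ℝ) : kummerM a b z = ∑' n, kummerCoeff a b n * z ^ n := rfl

section PowerSeries

variable {c : ℕ → ℝ}

def derivCoeff (c : ℕ → ℝ) (k : ℕ) : ℝ := (k + 1) * c (k + 1)

lemma summable_mul_pow (hc : ∀ r, Summable fun k => |c k| * r ^ k) (x : ℝ) :
    Summable fun k => c k * x ^ k :=
  .of_norm <| (hc |x|).congr fun k => by rw [norm_mul, norm_pow, Real.norm_eq_abs, Real.norm_eq_abs]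

lemma summable_abs_derivCoeff_mul_pow (hc : ∀ r, Summable fun k => |c k| * r ^ k) (r : ℝ) :
    Summable fun k => |derivCoeff c k| * r ^ k := by
  set R := 2 * (|r| + 1)
  refine .of_norm_bounded ((summable_nat_add_iff 1).mpr (hc R)) fun k => ?_
  have hk : ((k : ℝ) + 1) * |r| ^ k ≤ R ^ (k + 1) := by
    have h2k : (k : ℝ) + 1 ≤ 2 ^ (k + 1) := by exact_mod_cast Nat.lt_two_pow_self.le
    have hr : |r| ^ k ≤ (|r| + 1) ^ (k + 1) :=
      (pow_le_pow_left₀ (abs_nonneg r) (by linarith) k).trans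
        (pow_le_pow_right₀ (by linarith [abs_nonneg r]) k.le_succ)
    calc ((k : ℝ) + 1) * |r| ^ k ≤ 2 ^ (k + 1) * (|r| + 1) ^ (k + 1) := by gcongr
      _ = R ^ (k + 1) := by rw [mul_pow]
  calc ‖|derivCoeff c k| * r ^ k‖ = |c (k + 1)| * (((k : ℝ) + 1) * |r| ^ k) := by
        rw [derivCoeff, norm_mul, norm_pow, Real.norm_eq_abs, Real.norm_eq_abs, abs_abs, abs_mul,
          abs_of_pos (by positivity : (0 : ℝ) < k + 1)]
        ring
    _ ≤ |c (k + 1)| * R ^ (k + 1) := by gcongr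

lemma hasDerivAt_tsum_mul_pow (hc : ∀ r, Summable fun k => |c k| * r ^ k) (x : ℝ) :
    HasDerivAt (fun y => ∑' k, c k * y ^ k) (∑' k, derivCoeff c k * x ^ k) x := by
  have hsplit : (fun y => ∑' k, c k * y ^ k) = fun y => c 0 + ∑' k, c (k + 1) * y ^ (k + 1) :=
    funext fun y => by rw [(summable_mul_pow hc y).tsum_eq_zero_add, pow_zero, mul_one]
  rw [hsplit]
  refine HasDerivAt.const_add _ ?_
  set R := |x| + 1
  refine hasDerivAt_tsum_of_isPreconnected (g := fun k y => c (k + 1) * y ^ (k + 1))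
    (g' := fun k y => derivCoeff c k * y ^ k) (u := fun k => |derivCoeff c k| * R ^ k)
    (t := Set.Ioo (-R) R) (y₀ := 0) (summable_abs_derivCoeff_mul_pow hc R) isOpen_Ioo
    isPreconnected_Ioo (fun k y _ => ?_) (fun k y hy => ?_) ?_ ?_ ?_
  · refine ((hasDerivAt_pow (k + 1) y).const_mul (c (k + 1))).congr_deriv ?_
    simp only [derivCoeff, Nat.add_sub_cancel]; push_cast; ring
  · rw [norm_mul, norm_pow, Real.norm_eq_abs, Real.norm_eq_abs]
    gcongr
    exact (abs_lt.mpr hy).le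
  · constructor <;> linarith [abs_nonneg x]
  · simp
  · constructor <;> linarith [neg_abs_le x, le_abs_self x]

lemma hasSum_natCast_mul_mul_pow (hc : ∀ r, Summable fun k => |c k| * r ^ k) (x : ℝ) :
    HasSum (fun k => k * c k * x ^ k) (x * ∑' k, derivCoeff c k * x ^ k) := by
  rw [← hasSum_nat_add_iff' 1, Finset.sum_range_one, Nat.cast_zero, zero_mul, zero_mul, sub_zero]
  refine ((summable_mul_pow (summable_abs_derivCoeff_mul_pow hc) x).hasSum.mul_left x).congr_fun
    fun k => ?_
  simp only [derivCoeff]; push_cast; ring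

lemma summable_abs_mul_pow_of_abs_add_two_le {ρ : ℕ → ℝ} (hρ : Tendsto ρ atTop (𝓝 0))
    (hc : ∀ k, |c (k + 2)| ≤ ρ k * |c k|) (r : ℝ) :
    Summable fun k => |c k| * r ^ k := by
  suffices h : ∀ j, Summable fun m => |c (2 * m + j)| * r ^ (2 * m + j) from
    .even_add_odd (h 0) (h 1)
  intro j
  have hsmall : ∀ᶠ m : ℕ in atTop, ρ (2 * m + j) * r ^ 2 ≤ 1 / 2 := by
    have hidx : Tendsto (fun m : ℕ => 2 * m + j) atTop atTop :=
      tendsto_atTop_mono (fun m => show m ≤ 2 * m + j by omega) tendsto_id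
    have h := (hρ.comp hidx).mul_const (r ^ 2)
    rw [zero_mul] at h
    exact h.eventually (eventually_le_nhds (by norm_num))
  refine summable_of_ratio_norm_eventually_le (r := 1 / 2) (by norm_num) ?_
  filter_upwards [hsmall] with m hm
  have hidx : 2 * (m + 1) + j = 2 * m + j + 2 := by ring
  simp only [hidx, norm_mul, norm_pow, Real.norm_eq_abs, abs_abs]
  rw [pow_add _ _ 2]
  calc |c (2 * m + j + 2)| * (|r| ^ (2 * m + j) * |r| ^ 2)
      ≤ ρ (2 * m + j) * |c (2 * m + j)| * (|r| ^ (2 * m + j) * |r| ^ 2) := by gcongr; exact hc _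
    _ = ρ (2 * m + j) * |r| ^ 2 * (|c (2 * m + j)| * |r| ^ (2 * m + j)) := by ring
    _ ≤ 1 / 2 * (|c (2 * m + j)| * |r| ^ (2 * m + j)) := by gcongr; rwa [sq_abs]

end PowerSeries

/-- Taylor coefficients at `0` of the solution of `φ'' + 2ηφ' - 2αφ = 0` with `φ 0 = c₁` and
`φ' 0 = c₂`. -/
noncomputable def seriesCoeff (α c₁ c₂ : ℝ) : ℕ → ℝ
  | 0 => c₁
  | 1 => c₂
  | k + 2 => 2 * (α - k) / ((k + 1) * (k + 2)) * seriesCoeff α c₁ c₂ k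

section SeriesCoeff

variable (α c₁ c₂ : ℝ)

lemma summable_abs_seriesCoeff_mul_pow (r : ℝ) :
    Summable fun k => |seriesCoeff α c₁ c₂ k| * r ^ k := by
  refine summable_abs_mul_pow_of_abs_add_two_le (ρ := fun k => 2 * (|α| + 1) * (1 / (k + 1)))
    (by simpa using tendsto_one_div_add_atTop_nhds_zero_nat.const_mul (2 * (|α| + 1)))
    (fun k => ?_) r
  rw [seriesCoeff, abs_mul]
  gcongr
  rw [abs_div, abs_mul, abs_two, abs_of_pos (by positivity : (0 : ℝ) < (k + 1) * (k + 2)),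
    div_le_iff₀ (by positivity)]
  have hk : |α - k| ≤ |α| + k := by simpa using abs_sub α (k : ℝ)
  field_simp
  nlinarith [abs_nonneg α, (k.cast_nonneg : (0 : ℝ) ≤ k)]

lemma seriesCoeff_two_mul (m : ℕ) :
    seriesCoeff α c₁ c₂ (2 * m) = c₁ * (-1) ^ m * kummerCoeff (-α / 2) (1 / 2) m := by
  induction m with
  | zero => simp [seriesCoeff, kummerCoeff_zero]
  | succ m ih =>
    rw [show 2 * (m + 1) = 2 * m + 2 by ring, seriesCoeff, ih, kummerCoeff_succ]
    push_cast
    field_simp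
    ring

lemma seriesCoeff_two_mul_add_one (m : ℕ) :
    seriesCoeff α c₁ c₂ (2 * m + 1) =
      c₂ * (-1) ^ m * kummerCoeff (-α / 2 + 1 / 2) (3 / 2) m := by
  induction m with
  | zero => simp [seriesCoeff, kummerCoeff_zero]
  | succ m ih =>
    rw [show 2 * (m + 1) + 1 = 2 * m + 1 + 2 by ring, seriesCoeff, ih, kummerCoeff_succ]
    push_cast
    field_simp
    ring

lemma tsum_seriesCoeff_mul_pow (x : ℝ) :
    ∑' k, seriesCoeff α c₁ c₂ k * x ^ k =
      c₁ * kummerM (-α / 2) (1 / 2) (-x ^ 2) +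
        c₂ * x * kummerM (-α / 2 + 1 / 2) (3 / 2) (-x ^ 2) := by
  have hs := summable_mul_pow (summable_abs_seriesCoeff_mul_pow α c₁ c₂) x
  have heven : Summable fun m => seriesCoeff α c₁ c₂ (2 * m) * x ^ (2 * m) :=
    hs.comp_injective (i := fun m => 2 * m) fun i j h => by simpa using h
  have hodd : Summable fun m => seriesCoeff α c₁ c₂ (2 * m + 1) * x ^ (2 * m + 1) :=
    hs.comp_injective (i := fun m => 2 * m + 1) fun i j h => by simpa using h
  rw [← tsum_even_add_odd (f := fun k => seriesCoeff α c₁ c₂ k * x ^ k) heven hodd,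
    kummerM_eq_tsum, kummerM_eq_tsum, ← tsum_mul_left, ← tsum_mul_left]
  congr 1 <;> refine tsum_congr fun m => ?_
  · rw [seriesCoeff_two_mul, neg_pow, pow_mul]; ring
  · rw [seriesCoeff_two_mul_add_one, neg_pow, pow_succ, pow_mul]; ring

lemma tsum_seriesCoeff_solves_ode (x : ℝ) :
    ∑' k, derivCoeff (derivCoeff (seriesCoeff α c₁ c₂)) k * x ^ k +
        2 * x * ∑' k, derivCoeff (seriesCoeff α c₁ c₂) k * x ^ k -
      2 * α * ∑' k, seriesCoeff α c₁ c₂ k * x ^ k = 0 := by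
  set a := seriesCoeff α c₁ c₂
  have ha := summable_abs_seriesCoeff_mul_pow α c₁ c₂
  have hsum := (((summable_mul_pow (summable_abs_derivCoeff_mul_pow
    (summable_abs_derivCoeff_mul_pow ha)) x).hasSum.add
    ((hasSum_natCast_mul_mul_pow ha x).mul_left 2)).sub
    ((summable_mul_pow ha x).hasSum.mul_left (2 * α)))
  rw [← mul_assoc] at hsum
  refine hsum.unique (hasSum_zero.congr_fun fun k => ?_)
  simp only [derivCoeff, seriesCoeff]
  push_cast
  field_simp
  ring

end SeriesCoeff

theorem kummer_combination_solves_ode_general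
    (α : ℝ) (c₁ c₂ : ℝ) (φ : ℝ → ℝ)
    (hφ : ∀ η : ℝ, φ η = c₁ * kummerM (-α / 2) (1 / 2) (-η ^ 2) +
        c₂ * η * kummerM (-α / 2 + 1 / 2) (3 / 2) (-η ^ 2)) :
    (∀ η : ℝ, DifferentiableAt ℝ φ η) ∧
    (∀ η : ℝ, DifferentiableAt ℝ (deriv φ) η) ∧
    (∀ η : ℝ, deriv (deriv φ) η + 2 * η * deriv φ η - 2 * α * φ η = 0) := by
  set a := seriesCoeff α c₁ c₂
  have ha := summable_abs_seriesCoeff_mul_pow α c₁ c₂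
  have hφ_eq : φ = fun η => ∑' k, a k * η ^ k :=
    funext fun η => (hφ η).trans (tsum_seriesCoeff_mul_pow α c₁ c₂ η).symm
  have hφ' : ∀ η, HasDerivAt φ (∑' k, derivCoeff a k * η ^ k) η :=
    hφ_eq ▸ hasDerivAt_tsum_mul_pow ha
  have hφ'' : ∀ η, HasDerivAt (deriv φ) (∑' k, derivCoeff (derivCoeff a) k * η ^ k) η := by
    rw [funext fun η => (hφ' η).deriv]
    exact hasDerivAt_tsum_mul_pow (summable_abs_derivCoeff_mul_pow ha)
  refine ⟨fun η => (hφ' η).differentiableAt, fun η => (hφ'' η).differentiableAt, fun η => ?_⟩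
  rw [(hφ'' η).deriv, (hφ' η).deriv, hφ_eq]
  exact tsum_seriesCoeff_solves_ode α c₁ c₂ η

/-- For `α ≥ 0`, the function `φ(η) = c₁ M(-α/2,1/2,-η²) + c₂ η M(-α/2+1/2,3/2,-η²)`
is twice differentiable and satisfies `φ'' + 2ηφ' - 2αφ = 0`. -/
theorem kummer_combination_solves_ode
    (α : ℝ) (hα : 0 ≤ α) (c₁ c₂ : ℝ) (φ : ℝ → ℝ)
    (hφ : ∀ η : ℝ, φ η = c₁ * kummerM (-α / 2) (1 / 2) (-η ^ 2) +
        c₂ * η * kummerM (-α / 2 + 1 / 2) (3 / 2) (-η ^ 2)) :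
    (∀ η : ℝ, DifferentiableAt ℝ φ η) ∧
    (∀ η : ℝ, DifferentiableAt ℝ (deriv φ) η) ∧
    (∀ η : ℝ, deriv (deriv φ) η + 2 * η * deriv φ η - 2 * α * φ η = 0) :=
  kummer_combination_solves_ode_general α c₁ c₂ φ hφ
end

section
/- Let α ≥ 0 and define f(z) = 1/(z M(α/2+1, 3/2, z²)) for z > 0, so that the denominator never vanishes for z > 0. Then f is differentiable on (0,∞) and f'(z) = −f(z)² · M(α/2+1, 1/2, z²) for all z > 0. -/
open Filter


noncomputable def pc (a : ℝ) (n : ℕ) : ℝ := (ascPochhammer ℝ n).eval a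

lemma pc_succ (a : ℝ) (n : ℕ) : pc a (n+1) = pc a n * (a + n) := by
  simp [pc, ascPochhammer_succ_right]

lemma pc_zero (a : ℝ) : pc a 0 = 1 := by simp [pc]

lemma pc_pos {a : ℝ} (ha : 0 < a) (n : ℕ) : 0 < pc a n := ascPochhammer_pos n a ha

/-- `(3/2)_n = (2n+1) (1/2)_n`. -/
lemma pc_key (n : ℕ) : pc (3/2) n = (2*n+1) * pc (1/2) n := by
  induction n with
  | zero => simp [pc_zero]
  | succ n ih =>
    rw [pc_succ, pc_succ, ih]
    push_cast
    ring

lemma summable_main {a b x : ℝ} (ha : 0 ≤ a) (hb : 0 < b) (hx : 0 ≤ x) :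
    Summable (fun n : ℕ => (2*n+1 : ℝ) * (pc a n / (pc b n * n.factorial)) * x^n) := by
  set t : ℕ → ℝ := fun n => (2*n+1 : ℝ) * (pc a n / (pc b n * n.factorial)) * x^n with ht
  have hbn : ∀ n : ℕ, 0 < b + n := fun n => by positivity
  have hpa : ∀ n, 0 ≤ pc a n := by
    intro n
    induction n with
    | zero => simp [pc_zero]
    | succ n ih => rw [pc_succ]; positivity
  have ht_nonneg : ∀ n, 0 ≤ t n := by
    intro n
    have := pc_pos hb n
    have := hpa n
    have : (0:ℝ) < n.factorial := by positivity
    positivity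
  set r : ℕ → ℝ := fun n => (2*n+3)*(a+n)*x / ((2*n+1)*(b+n)*(n+1)) with hr
  have hrec : ∀ n : ℕ, t (n+1) = t n * r n := by
    intro n
    have h1 : (0:ℝ) < pc b n := pc_pos hb n
    have h2 : (0:ℝ) < (n.factorial : ℝ) := by positivity
    have h3 := hbn n
    have h4 : (0:ℝ) < 2*(n:ℝ)+1 := by positivity
    have h5 : (0:ℝ) < (n:ℝ)+1 := by positivity
    simp only [ht, hr, pc_succ, Nat.factorial_succ, pow_succ]
    push_cast
    field_simp
    ring
  have hle : ∀ n, r n ≤ 3*(a+1)*x / (b+n) := by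
    intro n
    have h3 := hbn n
    have h4 : (0:ℝ) < (2*n+1)*(b+n)*((n:ℝ)+1) := by positivity
    rw [hr, div_le_div_iff₀ h4 h3]
    have hn : (0:ℝ) ≤ (n:ℝ) := Nat.cast_nonneg n
    nlinarith [mul_nonneg (mul_nonneg ha hn) (mul_nonneg hx (le_of_lt h3)),
      mul_nonneg hx (le_of_lt h3), mul_nonneg hn (mul_nonneg hx (le_of_lt h3)),
      mul_nonneg (mul_nonneg hn hn) (mul_nonneg hx (le_of_lt h3)),
      mul_nonneg (mul_nonneg ha (mul_nonneg hn hn)) (mul_nonneg hx (le_of_lt h3)),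
      mul_nonneg (mul_nonneg ha hn) hx]
  have hto : Tendsto (fun n : ℕ => 3*(a+1)*x / (b+n)) atTop (nhds 0) := by
    apply Tendsto.div_atTop tendsto_const_nhds
    exact tendsto_atTop_add_const_left _ b tendsto_natCast_atTop_atTop
  have hev : ∀ᶠ n in atTop, r n < 1/2 := by
    filter_upwards [hto.eventually_lt_const (by norm_num : (0:ℝ) < 1/2)] with n hn
    exact lt_of_le_of_lt (hle n) hn
  apply summable_of_ratio_norm_eventually_le (by norm_num : (1:ℝ)/2 < 1)
  filter_upwards [hev] with n hn
  rw [Real.norm_eq_abs, Real.norm_eq_abs, abs_of_nonneg (ht_nonneg _), abs_of_nonneg (ht_nonneg _),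
    hrec n, mul_comm ((1:ℝ)/2)]
  exact mul_le_mul_of_nonneg_left (le_of_lt hn) (ht_nonneg n)

lemma summable_kummer {a b x : ℝ} (ha : 0 ≤ a) (hb : 0 < b) (hx : 0 ≤ x) :
    Summable (fun n : ℕ => (pc a n / (pc b n * n.factorial)) * x^n) := by
  have hpa : ∀ n, 0 ≤ pc a n := by
    intro n
    induction n with
    | zero => simp [pc_zero]
    | succ n ih => rw [pc_succ]; positivity
  refine Summable.of_nonneg_of_le (fun n => ?_) (fun n => ?_) (summable_main ha hb hx)
  · have := pc_pos hb n
    have := hpa n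
    have : (0:ℝ) < n.factorial := by positivity
    positivity
  · have h0 : 0 ≤ (pc a n / (pc b n * n.factorial)) * x^n := by
      have := pc_pos hb n
      have := hpa n
      have : (0:ℝ) < n.factorial := by positivity
      positivity
    nlinarith [Nat.cast_nonneg (α := ℝ) n]

/-- For `α ≥ 0` the function `f(z) = 1/(z M(α/2+1, 3/2, z²))` is differentiable on `(0,∞)`
with `f'(z) = -f(z)² M(α/2+1, 1/2, z²)`. -/
theorem deriv_f
    (α : ℝ) (hα : 0 ≤ α) (f : ℝ → ℝ)
    (hf : ∀ z : ℝ, 0 < z → f z = 1 / (z * kummerM (α / 2 + 1) (3 / 2) (z ^ 2))) :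
    ∀ z : ℝ, 0 < z →
      HasDerivAt f (-(f z) ^ 2 * kummerM (α / 2 + 1) (1 / 2) (z ^ 2)) z := by
  intro z hz
  set a : ℝ := α / 2 + 1 with ha_def
  have ha : 0 < a := by positivity
  have hpa : ∀ n, 0 < pc a n := pc_pos ha
  have hp32 : ∀ n, (0:ℝ) < pc (3/2) n := pc_pos (by norm_num)
  have hp12 : ∀ n, (0:ℝ) < pc (1/2) n := pc_pos (by norm_num)
  set c : ℕ → ℝ := fun n => pc a n / (pc (3/2) n * n.factorial) with hc
  have hc_pos : ∀ n, 0 < c n := by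
    intro n
    have := hpa n; have := hp32 n
    have : (0:ℝ) < n.factorial := by positivity
    positivity
  set g : ℝ → ℝ := fun y => ∑' n : ℕ, c n * y ^ (2*n+1) with hg_def
  -- g y = y * kummerM a (3/2) (y^2)
  have hg_eq : ∀ y : ℝ, g y = y * kummerM a (3/2) (y^2) := by
    intro y
    rw [hg_def, kummerM, ← tsum_mul_left]
    apply tsum_congr
    intro n
    show c n * y ^ (2*n+1) = y * (pc a n / (pc (3/2) n * n.factorial) * (y^2)^n)
    rw [← pow_mul, pow_succ]
    ring
  set R : ℝ := |z| + 1 with hR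
  have hRpos : (0:ℝ) < R := by positivity
  have hzR : z ∈ Metric.ball (0:ℝ) R := by
    rw [Metric.mem_ball, Real.dist_eq, sub_zero, hR]
    linarith
  -- derivative of g
  have hderiv : HasDerivAt g (∑' n : ℕ, c n * (((2*n+1 : ℕ):ℝ) * z ^ (2*n+1-1))) z := by
    have hu : Summable (fun n : ℕ =>
        (2*(n:ℝ)+1) * (pc a n / (pc (3/2) n * n.factorial)) * (R^2)^n) :=
      summable_main ha.le (by norm_num) (by positivity)
    refine hasDerivAt_tsum_of_isPreconnected hu Metric.isOpen_ball
      ((convex_ball (0:ℝ) R).isPreconnected)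
      (fun n y _ => (hasDerivAt_pow (2*n+1) y).const_mul (c n))
      (fun n y hy => ?_) (Metric.mem_ball_self hRpos) ?_ hzR
    · have hy' : |y| ≤ R := by
        rw [Metric.mem_ball, Real.dist_eq, sub_zero] at hy
        linarith
      have h1 : 2*n+1-1 = 2*n := by omega
      rw [h1, Real.norm_eq_abs, abs_mul, abs_mul, abs_of_nonneg (hc_pos n).le,
        abs_of_nonneg (Nat.cast_nonneg _)]
      have h2 : |y| ^ (2*n) ≤ (R^2)^n := by
        rw [← pow_mul]
        exact pow_le_pow_left₀ (abs_nonneg y) hy' (2*n)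
      calc c n * (((2*n+1:ℕ):ℝ) * |y ^ (2*n)|) = ((2*n+1:ℕ):ℝ) * c n * |y| ^ (2*n) := by
            rw [abs_pow]; ring
        _ ≤ ((2*n+1:ℕ):ℝ) * c n * (R^2)^n := by
            exact mul_le_mul_of_nonneg_left h2 (mul_nonneg (Nat.cast_nonneg _) (hc_pos n).le)
        _ = (2*(n:ℝ)+1) * (pc a n / (pc (3/2) n * n.factorial)) * (R^2)^n := by
            push_cast; rw [hc]
    · apply Summable.congr summable_zero
      intro n
      simp [zero_pow (by omega : 2*n+1 ≠ 0)]
  -- identify the derivative sum with kummerM a (1/2) (z^2)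
  have hsum_eq : (∑' n : ℕ, c n * (((2*n+1 : ℕ):ℝ) * z ^ (2*n+1-1))) = kummerM a (1/2) (z^2) := by
    rw [kummerM]
    apply tsum_congr
    intro n
    have h1 : 2*n+1-1 = 2*n := by omega
    show c n * (((2*n+1:ℕ):ℝ) * z ^ (2*n+1-1)) = pc a n / (pc (1/2) n * n.factorial) * (z^2)^n
    rw [h1]
    simp only [hc]
    rw [← pow_mul]
    have h32 := pc_key n
    have h12 := (hp12 n).ne'
    have h32' := (hp32 n).ne'
    have hfac : ((n.factorial : ℝ)) ≠ 0 := by positivity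
    rw [h32]
    push_cast
    field_simp
  rw [hsum_eq] at hderiv
  -- g z ≠ 0
  have hK_pos : 0 < kummerM a (3/2) (z^2) := by
    have hsum := summable_kummer (b := 3/2) (x := z^2) ha.le (by norm_num) (by positivity)
    have h0 : (1:ℝ) ≤ kummerM a (3/2) (z^2) := by
      have := Summable.le_tsum hsum 0 (fun i _ => by
        have := hpa i; have := hp32 i
        have : (0:ℝ) < i.factorial := by positivity
        positivity)
      have hrw : kummerM a (3/2) (z^2)
          = ∑' n : ℕ, (pc a n / (pc (3/2) n * n.factorial)) * (z^2)^n := rfl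
      rw [hrw]
      simpa [pc_zero] using this
    linarith
  have hgz : g z ≠ 0 := by
    rw [hg_eq]
    positivity
  -- conclude
  have hinv : HasDerivAt (fun y => (g y)⁻¹)
      (-(kummerM a (1/2) (z^2)) / (g z)^2) z := hderiv.inv hgz
  have heq : f =ᶠ[nhds z] fun y => (g y)⁻¹ := by
    filter_upwards [isOpen_Ioi.mem_nhds hz] with y hy
    rw [hf y hy, hg_eq, one_div]
  have : HasDerivAt f (-(kummerM a (1/2) (z^2)) / (g z)^2) z :=
    hinv.congr_of_eventuallyEq heq
  convert this using 1
  rw [hf z hz, hg_eq z]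
  have h1 : z ≠ 0 := hz.ne'
  have h2 : kummerM a (3/2) (z^2) ≠ 0 := hK_pos.ne'
  field_simp
end

section
/- For every real α ≥ 0 and every real ξ, the identity e^{−ξ²} = −2α ξ² M(−α/2 + 1/2, 3/2, −ξ²) M(−α/2 + 1, 3/2, −ξ²) + M(−α/2, 1/2, −ξ²) M(−α/2 + 1/2, 1/2, −ξ²) holds. -/
/-!
Put `a = -α/2` and `z = -ξ²`. Read as formal power series in `z`, Kummer's series obey four
contiguous relations (derivative and shifts of `a` and `b` by one). At `b = 1/2` they show that
`M(a,1/2)·M(a+1/2,1/2) - 4az·M(a+1/2,3/2)·M(a+1,3/2)` is its own derivative and has constant term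
`1`, so it is the exponential series. Summing this formal identity at `z` is legitimate because
every Kummer series with `b > 0` converges absolutely (`|(a)ₙ| ≤ (|a|+1)ⁿ n!` and
`(b)ₙ ≥ min(b,1)ⁿ n!`), so the Cauchy product formula applies.
-/

open PowerSeries Finset Nat

noncomputable def kummerSeries (a b : ℝ) : ℝ⟦X⟧ :=
  mk fun n => (ascPochhammer ℝ n).eval a / ((ascPochhammer ℝ n).eval b * n !)

lemma kummerM_eq_tsum_coeff_kummerSeries (a b z : ℝ) :
    kummerM a b z = ∑' n, coeff n (kummerSeries a b) * z ^ n := by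
  simp only [kummerM, kummerSeries, coeff_mk]

lemma ascPochhammer_succ_eval_left (x : ℝ) (n : ℕ) :
    (ascPochhammer ℝ (n + 1)).eval x = x * (ascPochhammer ℝ n).eval (x + 1) := by
  simp [ascPochhammer_succ_left, Polynomial.eval_comp]

lemma ascPochhammer_eval_mul_add_eq (x : ℝ) (n : ℕ) :
    (ascPochhammer ℝ n).eval x * (x + n) = x * (ascPochhammer ℝ n).eval (x + 1) := by
  rw [← ascPochhammer_succ_eval, ascPochhammer_succ_eval_left]

lemma ascPochhammer_eval_succ_eq {x : ℝ} (hx : x ≠ 0) (n : ℕ) :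
    (ascPochhammer ℝ n).eval (x + 1) = (ascPochhammer ℝ n).eval x * (x + n) / x := by
  rw [ascPochhammer_eval_mul_add_eq]
  field_simp

lemma abs_ascPochhammer_eval_le (x : ℝ) (n : ℕ) :
    |(ascPochhammer ℝ n).eval x| ≤ (|x| + 1) ^ n * n ! := by
  induction n with
  | zero => simp
  | succ n ih =>
    have hstep : |x + n| ≤ (|x| + 1) * (n + 1) := by
      have := abs_add_le x n
      rw [Nat.abs_cast] at this
      nlinarith [abs_nonneg x]
    rw [ascPochhammer_succ_eval, abs_mul, factorial_succ, cast_mul, cast_succ]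
    calc _ ≤ (|x| + 1) ^ n * n ! * ((|x| + 1) * (n + 1)) :=
          mul_le_mul ih hstep (abs_nonneg _) (by positivity)
      _ = _ := by ring

lemma pow_mul_factorial_le_ascPochhammer_eval {b : ℝ} (hb : 0 < b) (n : ℕ) :
    min b 1 ^ n * n ! ≤ (ascPochhammer ℝ n).eval b := by
  induction n with
  | zero => simp
  | succ n ih =>
    have hstep : min b 1 * (n + 1) ≤ b + n := by
      nlinarith [min_le_left b 1, min_le_right b 1, (n.cast_nonneg : (0 : ℝ) ≤ n)]
    rw [ascPochhammer_succ_eval, factorial_succ, cast_mul, cast_succ]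
    calc _ = min b 1 ^ n * n ! * (min b 1 * (n + 1)) := by ring
      _ ≤ _ := mul_le_mul ih hstep (by positivity) (ascPochhammer_pos n b hb).le

lemma summable_norm_coeff_kummerSeries_mul_pow (a : ℝ) {b : ℝ} (hb : 0 < b) (z : ℝ) :
    Summable fun n => ‖coeff n (kummerSeries a b) * z ^ n‖ := by
  set m := min b 1
  have hm : 0 < m := lt_min hb one_pos
  refine .of_nonneg_of_le (fun n => norm_nonneg _) (fun n => ?_)
    (Real.summable_pow_div_factorial ((|a| + 1) * |z| / m))
  have hpos := ascPochhammer_pos n b hb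
  calc ‖coeff n (kummerSeries a b) * z ^ n‖
      = |(ascPochhammer ℝ n).eval a| * |z| ^ n / ((ascPochhammer ℝ n).eval b * n !) := by
        rw [kummerSeries, coeff_mk, Real.norm_eq_abs, abs_mul, abs_div, abs_pow,
          abs_of_pos (mul_pos hpos (by positivity))]
        ring
    _ ≤ (|a| + 1) ^ n * n ! * |z| ^ n / (m ^ n * n ! * n !) := by
        gcongr
        · exact abs_ascPochhammer_eval_le a n
        · exact pow_mul_factorial_le_ascPochhammer_eval hb n
    _ = ((|a| + 1) * |z| / m) ^ n / n ! := by
        rw [div_pow, mul_pow]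
        field_simp

section Contiguous

variable (a : ℝ) {b : ℝ} (hb : 0 < b)
include hb

lemma derivative_kummerSeries :
    d⁄dX ℝ (kummerSeries a b) = C (a / b) * kummerSeries (a + 1) (b + 1) := by
  ext n
  have := ascPochhammer_pos n (b + 1) (by linarith)
  simp only [coeff_derivative, coeff_C_mul, kummerSeries, coeff_mk]
  rw [ascPochhammer_succ_eval_left a, ascPochhammer_succ_eval_left b, factorial_succ]
  push_cast
  field_simp

lemma derivative_kummerSeries_eq_add :
    d⁄dX ℝ (kummerSeries a b) = kummerSeries a b + C ((a - b) / b) * kummerSeries a (b + 1) := by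
  ext n
  have := ascPochhammer_pos n b hb
  simp only [coeff_derivative, map_add, coeff_C_mul, kummerSeries, coeff_mk]
  rw [ascPochhammer_succ_eval n a, ascPochhammer_succ_eval n b, ascPochhammer_eval_succ_eq hb.ne',
    factorial_succ]
  push_cast
  field_simp
  ring

lemma kummerSeries_eq_add_X_mul_derivative :
    kummerSeries a b =
      kummerSeries a (b + 1) + C b⁻¹ * (X * d⁄dX ℝ (kummerSeries a (b + 1))) := by
  ext n
  rcases n with _ | n
  · simp [kummerSeries]
  have := ascPochhammer_pos (n + 1) b hb
  simp only [map_add, coeff_C_mul, coeff_succ_X_mul, coeff_derivative, kummerSeries, coeff_mk]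
  rw [ascPochhammer_eval_succ_eq hb.ne']
  push_cast
  field_simp

lemma kummerSeries_eq_add_X_mul_derivative_sub :
    kummerSeries a b = kummerSeries (a + 1) (b + 1) +
      C b⁻¹ * (X * (d⁄dX ℝ (kummerSeries (a + 1) (b + 1)) - kummerSeries (a + 1) (b + 1))) := by
  ext n
  rcases n with _ | n
  · simp [kummerSeries]
  have := ascPochhammer_pos n (b + 1) (by linarith)
  simp only [map_add, map_sub, coeff_C_mul, coeff_succ_X_mul, coeff_derivative, kummerSeries,
    coeff_mk]
  rw [ascPochhammer_succ_eval_left a, ascPochhammer_succ_eval_left b,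
    ascPochhammer_succ_eval n (a + 1), ascPochhammer_succ_eval n (b + 1), factorial_succ]
  push_cast
  field_simp
  ring

end Contiguous

section Evaluation

variable {f g : ℝ⟦X⟧} {z : ℝ}

lemma coeff_mul_mul_pow (f g : ℝ⟦X⟧) (z : ℝ) (n : ℕ) :
    coeff n (f * g) * z ^ n =
      ∑ kl ∈ antidiagonal n, coeff kl.1 f * z ^ kl.1 * (coeff kl.2 g * z ^ kl.2) := by
  rw [coeff_mul, sum_mul]
  refine sum_congr rfl fun kl hkl => ?_
  rw [← mem_antidiagonal.mp hkl, pow_add]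
  ring

lemma summable_norm_coeff_mul_mul_pow (hf : Summable fun n => ‖coeff n f * z ^ n‖)
    (hg : Summable fun n => ‖coeff n g * z ^ n‖) :
    Summable fun n => ‖coeff n (f * g) * z ^ n‖ := by
  simpa only [coeff_mul_mul_pow] using summable_norm_sum_mul_antidiagonal_of_summable_norm hf hg

lemma tsum_coeff_mul_mul_pow (hf : Summable fun n => ‖coeff n f * z ^ n‖)
    (hg : Summable fun n => ‖coeff n g * z ^ n‖) :
    ∑' n, coeff n (f * g) * z ^ n = (∑' n, coeff n f * z ^ n) * ∑' n, coeff n g * z ^ n := by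
  simp only [coeff_mul_mul_pow, tsum_mul_tsum_eq_tsum_sum_antidiagonal_of_summable_norm hf hg]

lemma coeff_X_mul_mul_pow_succ (f : ℝ⟦X⟧) (z : ℝ) (n : ℕ) :
    coeff (n + 1) (X * f) * z ^ (n + 1) = z * (coeff n f * z ^ n) := by
  rw [coeff_succ_X_mul, pow_succ]
  ring

lemma summable_coeff_X_mul_mul_pow (hf : Summable fun n => coeff n f * z ^ n) :
    Summable fun n => coeff n (X * f) * z ^ n :=
  (summable_nat_add_iff 1).mp ((hf.mul_left z).congr fun n => (coeff_X_mul_mul_pow_succ f z n).symm)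

lemma tsum_coeff_X_mul_mul_pow (hf : Summable fun n => coeff n f * z ^ n) :
    ∑' n, coeff n (X * f) * z ^ n = z * ∑' n, coeff n f * z ^ n := by
  rw [(summable_coeff_X_mul_mul_pow hf).tsum_eq_zero_add, coeff_zero_X_mul, zero_mul, zero_add,
    ← tsum_mul_left]
  exact tsum_congr (coeff_X_mul_mul_pow_succ f z)

lemma tsum_coeff_exp_mul_pow (z : ℝ) : ∑' n, coeff n (exp ℝ) * z ^ n = Real.exp z := by
  rw [Real.exp_eq_exp_ℝ, NormedSpace.exp_eq_tsum_div]
  simp [coeff_exp, div_eq_inv_mul]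

end Evaluation

noncomputable def kummerProductSeries (a : ℝ) : ℝ⟦X⟧ :=
  kummerSeries a (1 / 2) * kummerSeries (a + 1 / 2) (1 / 2) -
    C (4 * a) * (X * (kummerSeries (a + 1 / 2) (3 / 2) * kummerSeries (a + 1) (3 / 2)))

lemma derivative_kummerProductSeries (a : ℝ) :
    d⁄dX ℝ (kummerProductSeries a) = kummerProductSeries a := by
  have hhalf : (0 : ℝ) < 1 / 2 := by norm_num
  have h₁ := derivative_kummerSeries a hhalf
  have h₂ := derivative_kummerSeries_eq_add (a + 1 / 2) hhalf
  have h₃ := kummerSeries_eq_add_X_mul_derivative (a + 1 / 2) hhalf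
  have h₄ := kummerSeries_eq_add_X_mul_derivative_sub a hhalf
  norm_num at h₁ h₂ h₃ h₄
  rw [show a / (1 / 2) = 2 * a by ring] at h₁ h₂
  simp only [kummerProductSeries, map_sub, Derivation.leibniz, derivative_X, derivative_C,
    smul_eq_mul]
  simp only [map_mul, map_ofNat] at h₁ h₂ h₃ h₄ ⊢
  linear_combination kummerSeries a (1 / 2) * h₂ + kummerSeries (a + 1 / 2) (1 / 2) * h₁ +
    2 * C a * kummerSeries (a + 1 / 2) (3 / 2) * h₄ + 2 * C a * kummerSeries (a + 1) (3 / 2) * h₃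

lemma kummerProductSeries_eq_exp (a : ℝ) : kummerProductSeries a = exp ℝ :=
  exp_unique_of_derivative_eq_self (derivative_kummerProductSeries a) (by
    simp [kummerProductSeries, kummerSeries, constantCoeff_mk])

theorem exp_eq_kummerM_mul_kummerM_sub (a z : ℝ) :
    Real.exp z = kummerM a (1 / 2) z * kummerM (a + 1 / 2) (1 / 2) z -
      4 * a * z * (kummerM (a + 1 / 2) (3 / 2) z * kummerM (a + 1) (3 / 2) z) := by
  have hM (x : ℝ) {b : ℝ} (hb : 0 < b) := summable_norm_coeff_kummerSeries_mul_pow x hb z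
  have hhalf : (0 : ℝ) < 1 / 2 := by norm_num
  have hthreehalves : (0 : ℝ) < 3 / 2 := by norm_num
  have hP := summable_norm_coeff_mul_mul_pow (hM a hhalf) (hM (a + 1 / 2) hhalf)
  have hQ := summable_norm_coeff_mul_mul_pow (hM (a + 1 / 2) hthreehalves) (hM (a + 1) hthreehalves)
  simp only [kummerM_eq_tsum_coeff_kummerSeries]
  rw [← tsum_coeff_exp_mul_pow, ← kummerProductSeries_eq_exp a,
    ← tsum_coeff_mul_mul_pow (hM a hhalf) (hM (a + 1 / 2) hhalf),
    ← tsum_coeff_mul_mul_pow (hM (a + 1 / 2) hthreehalves) (hM (a + 1) hthreehalves),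
    mul_assoc (4 * a) z,
    ← tsum_coeff_X_mul_mul_pow hQ.of_norm, ← tsum_mul_left,
    ← hP.of_norm.tsum_sub ((summable_coeff_X_mul_mul_pow hQ.of_norm).mul_left _)]
  refine tsum_congr fun n => ?_
  simp only [kummerProductSeries, map_sub, coeff_C_mul]
  ring

theorem kummer_product_identity_general (α : ℝ) (ξ : ℝ) :
    Real.exp (-ξ ^ 2) =
      -2 * α * ξ ^ 2 * kummerM (-α / 2 + 1 / 2) (3 / 2) (-ξ ^ 2) *
          kummerM (-α / 2 + 1) (3 / 2) (-ξ ^ 2) +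
        kummerM (-α / 2) (1 / 2) (-ξ ^ 2) * kummerM (-α / 2 + 1 / 2) (1 / 2) (-ξ ^ 2) := by
  linear_combination exp_eq_kummerM_mul_kummerM_sub (-α / 2) (-ξ ^ 2)

/-- The product identity
`e^{-ξ²} = -2αξ² M(-α/2+1/2,3/2,-ξ²) M(-α/2+1,3/2,-ξ²) + M(-α/2,1/2,-ξ²) M(-α/2+1/2,1/2,-ξ²)`. -/
theorem kummer_product_identity (α : ℝ) (hα : 0 ≤ α) (ξ : ℝ) :
    Real.exp (-ξ ^ 2) =
      -2 * α * ξ ^ 2 * kummerM (-α / 2 + 1 / 2) (3 / 2) (-ξ ^ 2) *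
          kummerM (-α / 2 + 1) (3 / 2) (-ξ ^ 2) +
        kummerM (-α / 2) (1 / 2) (-ξ ^ 2) * kummerM (-α / 2 + 1 / 2) (1 / 2) (-ξ ^ 2) :=
  kummer_product_identity_general α ξ
end
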